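/- arXiv:2208.07026 — 2 statements merged into one kernel-verified Lean document; each statement's English description precedes it below -/
import Mathlib

section
/- Let $M_1, M_2 \geq 1$, let $P_1, P_2, N > 0$, and for $i \in \{1,2\}$ let $\hat{h}_i \geq 0$ and $g_{im}, h_{im} \geq 0$, $\theta_{im}, \psi_{im} \in \mathbb{R}$ for $m = 1, \dots, M_i$. For a choice of phase shifts $\varphi = (\varphi_{im})$ write $A_i(\varphi) = |\hat{h}_i + \sum_{m=1}^{M_i} g_{im} h_{im} e^{j(\varphi_{im} - \theta_{im} - \psi_{im})}|^2$ and define the region $Q(\varphi) = \{(R_1, R_2) \in \mathbb{R}^2 : R_1 \geq 0,\ R_2 \geq 0,\ R_2 \leq \log_2(1 + \min\{P_1 A_1(\varphi), P_2 A_2(\varphi)\}/N),\ R_1 + R_2 \leq \log_2(1 + P_1 A_1(\varphi)/N)\}$. Then the convex hull of the union of $Q(\varphi)$ over all real phase-shift vectors $\varphi$ equals $\{(R_1, R_2) \in \mathbb{R}^2 : R_1 \geq 0,\ R_2 \geq 0,\ R_2 \leq \log_2(1 + \min\{P_1 a_1^2, P_2 a_2^2\}/N),\ R_1 + R_2 \leq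 \log_2(1 + P_1 a_1^2/N)\}$, where $a_i = \hat{h}_i + \sum_{m=1}^{M_i} g_{im} h_{im}$. -/
open Complex Finset

lemma amp_le (n : ℕ) (c : ℝ) (hc : 0 ≤ c) (w : Fin n → ℝ) (hw : ∀ m, 0 ≤ w m)
    (t : Fin n → ℝ) :
    ‖((c : ℂ) + ∑ m, (w m : ℂ) * Complex.exp (Complex.I * t m))‖ ≤ c + ∑ m, w m := by
  calc ‖((c : ℂ) + ∑ m, (w m : ℂ) * Complex.exp (Complex.I * t m))‖
      ≤ ‖(c : ℂ)‖ + ‖(∑ m, (w m : ℂ) * Complex.exp (Complex.I * t m))‖ :=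
        norm_add_le _ _
    _ ≤ c + ∑ m, w m := by
        refine add_le_add ?_ ?_
        · simp [_root_.abs_of_nonneg hc]
        · refine le_trans (norm_sum_le _ _) (Finset.sum_le_sum fun m _ => ?_)
          rw [norm_mul]
          have h1 : ‖(Complex.exp (Complex.I * t m))‖ = 1 := by
            rw [Complex.norm_exp]
            simp
          rw [h1, mul_one, Complex.norm_of_nonneg (hw m)]
lemma logb_mono_aux (x y : ℝ) (hx : 0 ≤ x) (hxy : x ≤ y) (N : ℝ) (hN : 0 < N) :
    Real.logb 2 (1 + x / N) ≤ Real.logb 2 (1 + y / N) := by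
  apply Real.logb_le_logb_of_le one_lt_two
  · positivity
  · gcongr


/-- Theorem 2: capacity region of the RIS-aided single dirty MAC under strong
interference.  The convex hull of the union, over all phase-shift vectors, of the
instantaneous regions (with constraints on `R₂` and on `R₁ + R₂`) equals the region
obtained with ideal phase shifts (effective gains `aᵢ = ĥ i + ∑ m, g i m * h i m`). -/
theorem capacity_region_single_dirty_MAC
    (M : Fin 2 → ℕ) (hM : ∀ i, 1 ≤ M i)
    (P : Fin 2 → ℝ) (hP : ∀ i, 0 < P i) (N : ℝ) (hN : 0 < N)
    (hhat : Fin 2 → ℝ) (hhat_nonneg : ∀ i, 0 ≤ hhat i)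
    (g h : (i : Fin 2) → Fin (M i) → ℝ)
    (hg : ∀ i m, 0 ≤ g i m) (hh : ∀ i m, 0 ≤ h i m)
    (θ ψ : (i : Fin 2) → Fin (M i) → ℝ) :
    convexHull ℝ
      (⋃ φ : (i : Fin 2) → Fin (M i) → ℝ,
        {R : ℝ × ℝ | 0 ≤ R.1 ∧ 0 ≤ R.2 ∧
          (R.2 ≤ Real.logb 2 (1 + min
            (P 0 * ‖((hhat 0 : ℂ) + ∑ m, (↑(g 0 m * h 0 m) : ℂ) *
                Complex.exp (Complex.I * ↑(φ 0 m - θ 0 m - ψ 0 m)))‖ ^ 2)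
            (P 1 * ‖((hhat 1 : ℂ) + ∑ m, (↑(g 1 m * h 1 m) : ℂ) *
                Complex.exp (Complex.I * ↑(φ 1 m - θ 1 m - ψ 1 m)))‖ ^ 2) / N)) ∧
          R.1 + R.2 ≤ Real.logb 2 (1 +
            P 0 * ‖((hhat 0 : ℂ) + ∑ m, (↑(g 0 m * h 0 m) : ℂ) *
                Complex.exp (Complex.I * ↑(φ 0 m - θ 0 m - ψ 0 m)))‖ ^ 2 / N)})
    = {R : ℝ × ℝ | 0 ≤ R.1 ∧ 0 ≤ R.2 ∧
        (R.2 ≤ Real.logb 2 (1 + min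
          (P 0 * (hhat 0 + ∑ m, g 0 m * h 0 m) ^ 2)
          (P 1 * (hhat 1 + ∑ m, g 1 m * h 1 m) ^ 2) / N)) ∧
        R.1 + R.2 ≤ Real.logb 2 (1 +
          P 0 * (hhat 0 + ∑ m, g 0 m * h 0 m) ^ 2 / N)} := by
  set a : Fin 2 → ℝ := fun i => hhat i + ∑ m, g i m * h i m with ha
  have ha_nonneg : ∀ i, 0 ≤ a i := fun i =>
    add_nonneg (hhat_nonneg i) (Finset.sum_nonneg fun m _ => mul_nonneg (hg i m) (hh i m))
  -- amplitude bound for any phase choice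
  have hamp : ∀ (i : Fin 2) (φ : (i : Fin 2) → Fin (M i) → ℝ),
      ‖((hhat i : ℂ) + ∑ m, (↑(g i m * h i m) : ℂ) *
        Complex.exp (Complex.I * ↑(φ i m - θ i m - ψ i m)))‖ ^ 2 ≤ (a i) ^ 2 := by
    intro i φ
    have := amp_le (M i) (hhat i) (hhat_nonneg i) (fun m => g i m * h i m)
      (fun m => mul_nonneg (hg i m) (hh i m)) (fun m => φ i m - θ i m - ψ i m)
    exact pow_le_pow_left₀ (norm_nonneg _) this 2
  apply le_antisymm
  · -- convexHull ⊆ ideal region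
    apply convexHull_min
    · -- union ⊆ ideal region
      rintro R hR
      simp only [Set.mem_iUnion, Set.mem_setOf_eq] at hR
      obtain ⟨φ, h1, h2, h3, h4⟩ := hR
      refine ⟨h1, h2, ?_, ?_⟩
      · refine h3.trans (logb_mono_aux _ _ ?_ ?_ N hN)
        · exact le_min (mul_nonneg (hP 0).le (by positivity)) (mul_nonneg (hP 1).le (by positivity))
        · exact min_le_min (mul_le_mul_of_nonneg_left (hamp 0 φ) (hP 0).le)
            (mul_le_mul_of_nonneg_left (hamp 1 φ) (hP 1).le)
      · refine h4.trans (logb_mono_aux _ _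
          (mul_nonneg (hP 0).le (by positivity)) ?_ N hN)
        exact mul_le_mul_of_nonneg_left (hamp 0 φ) (hP 0).le
    · -- ideal region is convex
      rintro p ⟨p1, p2, p3, p4⟩ q ⟨q1, q2, q3, q4⟩ s t hs ht hst
      refine ⟨?_, ?_, ?_, ?_⟩ <;>
        simp only [Prod.fst_add, Prod.snd_add, Prod.smul_fst, Prod.smul_snd, smul_eq_mul] <;>
        nlinarith
  · -- ideal region ⊆ union ⊆ convexHull
    refine le_trans ?_ (subset_convexHull ℝ _)
    rintro R ⟨h1, h2, h3, h4⟩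
    refine Set.mem_iUnion.2 ⟨fun i m => θ i m + ψ i m, ?_⟩
    have key : ∀ i : Fin 2, ‖((hhat i : ℂ) + ∑ m, (↑(g i m * h i m) : ℂ) *
        Complex.exp (Complex.I * ↑((θ i m + ψ i m) - θ i m - ψ i m)))‖ ^ 2 = (a i) ^ 2 := by
      intro i
      have hz : ∀ m : Fin (M i), ((θ i m + ψ i m) - θ i m - ψ i m : ℝ) = 0 := fun m => by ring
      simp only [hz, Complex.ofReal_zero, mul_zero, Complex.exp_zero, mul_one]
      rw [show ((hhat i : ℂ) + ∑ m, (↑(g i m * h i m) : ℂ)) = ((a i : ℝ) : ℂ) by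
        push_cast [ha]; ring]
      rw [Complex.norm_of_nonneg (ha_nonneg i)]
    exact ⟨h1, h2, by rw [key 0, key 1]; exact h3, by rw [key 0]; exact h4⟩
end

section
/- Let $\mu \in \mathbb{R}$, $s > 0$, and $\hat{\gamma}, \tilde{\gamma} > 0$ with $\hat{\gamma} > 2 s^2 \tilde{\gamma}$. Let $H \sim \mathcal{N}(\mu, s^2)$ and let $E$ be an independent exponential random variable with rate $1$. Then for every $t > 0$, $\Pr\big(\hat{\gamma} E + \tilde{\gamma} H^2 \leq t\big) = \sum_{l=0}^{\infty} \frac{\beta_l}{\zeta^{\kappa_l}}\, \gamma_{\ell}\Big(\kappa_l, \frac{\zeta t}{\tilde{\gamma}}\Big) - e^{-t/\hat{\gamma}} \sum_{l=0}^{\infty} \frac{\beta_l}{\omega^{\kappa_l}}\, \gamma_{\ell}\Big(\kappa_l, \frac{\omega t}{\tilde{\gamma}}\Big)$, where $\zeta = 1/(2 s^2)$, $\omega = \zeta - \tilde{\gamma}/\hat{\gamma}$, $\kappa_l = l + 1/2$, $\beta_l = \dfrac{e^{-\mu^2/(2 s^2)}\, \mu^{2l}}{(2 s^2)^{2l + 1/2}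 \; l! \; \Gamma(l + 1/2)}$, and $\gamma_{\ell}(\kappa, x) = \int_0^x u^{\kappa - 1} e^{-u}\, du$ is the lower incomplete gamma function. -/
open Real MeasureTheory ProbabilityTheory
open scoped ENNReal NNReal
open Set

/-- The lower incomplete gamma function `γ(κ, x) = ∫_0^x u^(κ-1) e^(-u) du`. -/
noncomputable def lowerIncGamma (κ x : ℝ) : ℝ :=
  ∫ u in (0:ℝ)..x, u ^ (κ - 1) * Real.exp (-u)

/-- Mixture coefficient `β_l = e^(-m²/(2s²)) m^(2l) / ((2s²)^(2l+1/2) l! Γ(l+1/2))`. -/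
noncomputable def mixCoeff (m s : ℝ) (l : ℕ) : ℝ :=
  Real.exp (-m ^ 2 / (2 * s ^ 2)) * m ^ (2 * l) /
    ((2 * s ^ 2) ^ ((2 * (l : ℝ)) + 1 / 2) * (Nat.factorial l) *
      Real.Gamma ((l : ℝ) + 1 / 2))

lemma gamma_nat_add_half (l : ℕ) :
    Real.Gamma ((l : ℝ) + 1 / 2) * (4 ^ l * l.factorial) = (2 * l).factorial * Real.sqrt π := by
  induction l with
  | zero =>
    rw [show ((0:ℕ):ℝ) + 1/2 = 1/2 by norm_num, Real.Gamma_one_half_eq]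
    simp
  | succ n ih =>
    have h2 : ((n : ℝ) + 1 / 2) ≠ 0 := by positivity
    have h3 : Real.Gamma ((n : ℝ) + 1 + 1/2) = ((n:ℝ) + 1/2) * Real.Gamma ((n:ℝ) + 1/2) := by
      rw [show ((n:ℝ) + 1 + 1/2) = ((n:ℝ) + 1/2) + 1 by ring, Real.Gamma_add_one h2]
    have hfac : ((2 * (n+1)).factorial : ℝ) = (2*n+2) * ((2*n+1) * (2*n).factorial) := by
      have : 2 * (n+1) = (2*n+1) + 1 := by ring
      rw [this, Nat.factorial_succ]
      push_cast [Nat.factorial_succ]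
      ring
    have hfac2 : ((n+1).factorial : ℝ) = (n+1) * n.factorial := by
      rw [Nat.factorial_succ]; push_cast; ring
    push_cast [h3, hfac, hfac2, pow_succ]
    linear_combination (4*((n:ℝ)+1/2)*((n:ℝ)+1)) * ih

lemma hasSum_exp_add_exp_neg (z : ℝ) :
    HasSum (fun l : ℕ => 2 * z ^ (2 * l) / (2 * l).factorial) (Real.exp z + Real.exp (-z)) := by
  have hexp : ∀ w : ℝ, HasSum (fun n : ℕ => w ^ n / n.factorial) (Real.exp w) := by
    intro w
    have h2 : Real.exp w = ∑' n : ℕ, w ^ n / n.factorial := by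
      rw [Real.exp_eq_exp_ℝ, NormedSpace.exp_eq_tsum_div]
    rw [h2]
    exact (NormedSpace.expSeries_div_summable w).hasSum
  have hg : HasSum (fun n : ℕ => z ^ n / n.factorial + (-z) ^ n / n.factorial)
      (Real.exp z + Real.exp (-z)) := (hexp z).add (hexp (-z))
  set g : ℕ → ℝ := fun n => z ^ n / n.factorial + (-z) ^ n / n.factorial with hgdef
  have hge : ∀ k : ℕ, g (2 * k) = 2 * z ^ (2 * k) / (2 * k).factorial := by
    intro k
    simp only [hgdef]
    rw [Even.neg_pow (even_two_mul k)]
    ring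
  have hgo : ∀ k : ℕ, g (2 * k + 1) = 0 := by
    intro k
    simp only [hgdef]
    rw [Odd.neg_pow ⟨k, by ring⟩]
    ring
  have hsummable : Summable (fun k : ℕ => g (2 * k)) := by
    apply Summable.of_nonneg_of_le (fun k => ?_) (fun k => ?_)
      ((Real.summable_pow_div_factorial (z ^ 2)).mul_left 2)
    · rw [hge k, pow_mul]; positivity
    · rw [hge k, mul_div_assoc, pow_mul]
      gcongr
      omega
  have he : HasSum (fun k : ℕ => g (2 * k)) (∑' k, g (2 * k)) := hsummable.hasSum
  have ho : HasSum (fun k : ℕ => g (2 * k + 1)) 0 := by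
    simpa [hgo] using hasSum_zero
  have hall := he.even_add_odd ho
  rw [add_zero] at hall
  have hsum_eq : ∑' k, g (2 * k) = Real.exp z + Real.exp (-z) := hall.unique hg
  rw [hsum_eq] at he
  rwa [show (fun k : ℕ => g (2*k)) = fun l : ℕ => 2 * z^(2*l) / (2*l).factorial from funext hge]
    at he

lemma denom_eq (s : ℝ) (hs : 0 < s) (l : ℕ) :
    (2 * s ^ 2) ^ ((2 * (l : ℝ)) + 1 / 2) * (Nat.factorial l) * Real.Gamma ((l : ℝ) + 1 / 2)
      = Real.sqrt (2 * π * s ^ 2) * s ^ (4 * l) * (2 * l).factorial := by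
  have h2s : (0:ℝ) < 2 * s ^ 2 := by positivity
  have h1 : (2 * s ^ 2 : ℝ) ^ ((2 * (l : ℝ)) + 1 / 2)
      = (2 * s ^ 2) ^ (2 * l : ℕ) * Real.sqrt (2 * s ^ 2) := by
    rw [Real.rpow_add h2s, ← Real.rpow_natCast (2 * s ^ 2) (2 * l),
      Real.sqrt_eq_rpow]
    push_cast
    ring_nf
  rw [h1]
  have h2 : Real.sqrt (2 * π * s ^ 2) = Real.sqrt (2 * s ^ 2) * Real.sqrt π := by
    rw [← Real.sqrt_mul h2s.le]
    ring_nf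
  rw [h2]
  have h3 : ((2 * s ^ 2) ^ (2 * l : ℕ) : ℝ) = 4 ^ l * s ^ (4 * l) := by
    rw [mul_pow, ← pow_mul, show 2*(2*l) = 4*l from by ring, pow_mul 2 2 l]
    norm_num
  rw [h3]
  have hgam := gamma_nat_add_half l
  linear_combination (s ^ (4*l) * Real.sqrt (2*s^2)) * hgam

lemma mixCoeff_eq (m s : ℝ) (hs : 0 < s) (l : ℕ) :
    mixCoeff m s l = Real.exp (-m ^ 2 / (2 * s ^ 2)) * m ^ (2 * l) /
      (Real.sqrt (2 * π * s ^ 2) * s ^ (4 * l) * (2 * l).factorial) := by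
  rw [mixCoeff, denom_eq s hs l]

lemma mixCoeff_nonneg (m s : ℝ) (hs : 0 < s) (l : ℕ) : 0 ≤ mixCoeff m s l := by
  rw [mixCoeff_eq m s hs l, pow_mul]
  have hsq : (0:ℝ) < Real.sqrt (2 * π * s ^ 2) := Real.sqrt_pos.mpr (by positivity)
  positivity

lemma gauss_fold (m s : ℝ) (hs : 0 < s) (x : ℝ) :
    HasSum (fun l : ℕ => 2 * mixCoeff m s l * x ^ (2 * l) * Real.exp (-(x ^ 2 / (2 * s ^ 2))))
      (gaussianPDFReal m (⟨s ^ 2, sq_nonneg s⟩ : ℝ≥0) x +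
        gaussianPDFReal m (⟨s ^ 2, sq_nonneg s⟩ : ℝ≥0) (-x)) := by
  have hsne : s ≠ 0 := hs.ne'
  have hsqrt : (0:ℝ) < Real.sqrt (2 * π * s ^ 2) := Real.sqrt_pos.mpr (by positivity)
  set C : ℝ := (Real.sqrt (2 * π * s ^ 2))⁻¹ * Real.exp (-((x ^ 2 + m ^ 2) / (2 * s ^ 2)))
    with hC
  have key := (hasSum_exp_add_exp_neg (m * x / s ^ 2)).mul_left C
  have hsum_eq : C * (Real.exp (m * x / s ^ 2) + Real.exp (-(m * x / s ^ 2)))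
      = gaussianPDFReal m (⟨s ^ 2, sq_nonneg s⟩ : ℝ≥0) x
        + gaussianPDFReal m (⟨s ^ 2, sq_nonneg s⟩ : ℝ≥0) (-x) := by
    simp only [gaussianPDFReal, NNReal.coe_mk, hC]
    erw [NNReal.coe_mk]
    rw [mul_add]
    congr 1
    · rw [mul_assoc, ← Real.exp_add]
      congr 1
      field_simp
      ring
    · rw [mul_assoc, ← Real.exp_add]
      congr 1
      field_simp
      ring
  have hterm : ∀ l : ℕ, C * (2 * (m * x / s ^ 2) ^ (2 * l) / (2 * l).factorial)
      = 2 * mixCoeff m s l * x ^ (2 * l) * Real.exp (-(x ^ 2 / (2 * s ^ 2))) := by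
    intro l
    rw [mixCoeff_eq m s hs l, hC]
    have hes : Real.exp (-((x ^ 2 + m ^ 2) / (2 * s ^ 2)))
        = Real.exp (-m ^ 2 / (2 * s ^ 2)) * Real.exp (-(x ^ 2 / (2 * s ^ 2))) := by
      rw [← Real.exp_add]
      congr 1
      field_simp
      ring
    rw [hes, div_pow, mul_pow]
    have hsp : ((s:ℝ) ^ 2) ^ (2 * l) = s ^ (4 * l) := by
      rw [← pow_mul, show 2*(2*l) = 4*l from by ring]
    rw [hsp]
    have hfacpos : (0:ℝ) < (2*l).factorial := by exact_mod_cast (2*l).factorial_pos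
    have hspow : (0:ℝ) < s ^ (4*l) := by positivity
    field_simp
  rw [hsum_eq] at key
  rwa [show (fun l : ℕ => C * (2 * (m * x / s ^ 2) ^ (2 * l) / (2 * l).factorial))
      = fun l : ℕ => 2 * mixCoeff m s l * x ^ (2 * l) * Real.exp (-(x ^ 2 / (2 * s ^ 2)))
    from funext hterm] at key

lemma lowerIncGamma_nonneg {κ x : ℝ} (hx : 0 ≤ x) : 0 ≤ lowerIncGamma κ x := by
  apply intervalIntegral.integral_nonneg hx
  intro u hu
  exact mul_nonneg (Real.rpow_nonneg hu.1 _) (Real.exp_pos _).le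

lemma lowerIncGamma_le_Gamma {κ x : ℝ} (hκ : 0 < κ) (hx : 0 ≤ x) :
    lowerIncGamma κ x ≤ Real.Gamma κ := by
  rw [lowerIncGamma, intervalIntegral.integral_of_le hx, Real.Gamma_eq_integral hκ]
  have hint : IntegrableOn (fun u : ℝ => Real.exp (-u) * u ^ (κ - 1)) (Ioi 0) :=
    Real.GammaIntegral_convergent hκ
  have hint' : IntegrableOn (fun u : ℝ => u ^ (κ - 1) * Real.exp (-u)) (Ioi 0) := by
    simpa [mul_comm] using hint
  calc ∫ u in Ioc 0 x, u ^ (κ - 1) * Real.exp (-u)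
      ≤ ∫ u in Ioi 0, u ^ (κ - 1) * Real.exp (-u) := by
        apply setIntegral_mono_set hint'
        · filter_upwards [ae_restrict_mem measurableSet_Ioi] with u hu
          exact mul_nonneg (Real.rpow_nonneg (le_of_lt hu) _) (Real.exp_pos _).le
        · exact HasSubset.Subset.eventuallyLE Ioc_subset_Ioi_self
    _ = ∫ u in Ioi 0, Real.exp (-u) * u ^ (κ - 1) := by simp [mul_comm]

lemma integral_pow_exp (l : ℕ) {a X : ℝ} (ha : 0 < a) (hX : 0 ≤ X) :
    ∫ x in Ioo (0:ℝ) X, x ^ (2 * l) * Real.exp (-(a * x ^ 2))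
      = lowerIncGamma ((l : ℝ) + 1 / 2) (a * X ^ 2) / (2 * a ^ ((l : ℝ) + 1 / 2)) := by
  rcases hX.eq_or_lt with rfl | hX'
  · simp [lowerIncGamma]
  have himg : (fun x : ℝ => a * x ^ 2) '' Ioo 0 X = Ioo 0 (a * X ^ 2) := by
    ext y
    simp only [mem_image, mem_Ioo]
    constructor
    · rintro ⟨x, ⟨hx0, hxX⟩, rfl⟩
      constructor
      · positivity
      · have hx2 : x ^ 2 < X ^ 2 := by nlinarith
        exact (mul_lt_mul_iff_right₀ ha).mpr hx2
    · rintro ⟨hy0, hyX⟩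
      refine ⟨Real.sqrt (y / a), ⟨Real.sqrt_pos.mpr (by positivity), ?_⟩, ?_⟩
      · have h1 : y / a < X ^ 2 := (div_lt_iff₀ ha).mpr (by linarith [hyX])
        calc Real.sqrt (y / a) < Real.sqrt (X ^ 2) :=
              Real.sqrt_lt_sqrt (by positivity) h1
          _ = X := Real.sqrt_sq hX
      · rw [Real.sq_sqrt (by positivity : 0 ≤ y / a)]
        field_simp
  have hderiv : ∀ x ∈ Ioo (0:ℝ) X,
      HasDerivWithinAt (fun x : ℝ => a * x ^ 2) (2 * a * x) (Ioo 0 X) x := by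
    intro x _
    have : HasDerivAt (fun x : ℝ => a * x ^ 2) (2 * a * x) x := by
      exact ((hasDerivAt_pow 2 x).const_mul a).congr_deriv (by ring)
    exact this.hasDerivWithinAt
  have hinj : InjOn (fun x : ℝ => a * x ^ 2) (Ioo 0 X) := by
    intro u hu v hv huv
    have h2 : u ^ 2 = v ^ 2 := by
      field_simp at huv
      exact huv
    rw [← Real.sqrt_sq hu.1.le, h2, Real.sqrt_sq hv.1.le]
  have hcv := integral_image_eq_integral_abs_deriv_smul measurableSet_Ioo hderiv hinj
    (fun u : ℝ => u ^ ((l : ℝ) + 1 / 2 - 1) * Real.exp (-u))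
  rw [himg] at hcv
  have hlast : lowerIncGamma ((l : ℝ) + 1 / 2) (a * X ^ 2)
      = ∫ u in Ioo (0:ℝ) (a * X ^ 2), u ^ ((l : ℝ) + 1 / 2 - 1) * Real.exp (-u) := by
    rw [lowerIncGamma, intervalIntegral.integral_of_le (by positivity),
      integral_Ioc_eq_integral_Ioo]
  rw [hlast, hcv]
  have hrw : EqOn (fun x : ℝ => |2 * a * x| •
        ((a * x ^ 2) ^ ((l : ℝ) + 1 / 2 - 1) * Real.exp (-(a * x ^ 2))))
      (fun x : ℝ => (2 * a ^ ((l : ℝ) + 1 / 2)) * (x ^ (2 * l) * Real.exp (-(a * x ^ 2))))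
      (Ioo 0 X) := by
    intro x hx
    have hx0 : (0:ℝ) < x := hx.1
    simp only [smul_eq_mul]
    rw [abs_of_pos (by positivity : (0:ℝ) < 2 * a * x)]
    rw [Real.mul_rpow ha.le (sq_nonneg x)]
    have hpow : ((x:ℝ) ^ 2) ^ ((l : ℝ) + 1 / 2 - 1) = x ^ ((2 * l : ℝ) - 1) := by
      rw [← Real.rpow_natCast x 2, ← Real.rpow_mul hx0.le]
      congr 1
      push_cast
      ring
    rw [hpow]
    have hx1 : x ^ (2 * l : ℕ) = x * x ^ ((2 * l : ℝ) - 1) := by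
      nth_rewrite 2 [← Real.rpow_one x]
      rw [← Real.rpow_add hx0, ← Real.rpow_natCast x (2 * l)]
      congr 1
      push_cast
      ring
    have hapow : a ^ ((l : ℝ) + 1 / 2) = a * a ^ ((l : ℝ) + 1 / 2 - 1) := by
      nth_rewrite 2 [← Real.rpow_one a]
      rw [← Real.rpow_add ha]
      congr 1
      ring
    rw [hx1, hapow]
    ring
  rw [setIntegral_congr_fun measurableSet_Ioo hrw, MeasureTheory.integral_const_mul]
  have hane : (0:ℝ) < a ^ ((l : ℝ) + 1 / 2) := Real.rpow_pos_of_pos ha _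
  field_simp

lemma term_bound (m s : ℝ) (hs : 0 < s) {a : ℝ} (ha : 0 < a) (l : ℕ) :
    mixCoeff m s l / a ^ ((l : ℝ) + 1 / 2) * Real.Gamma ((l : ℝ) + 1 / 2)
      = (Real.exp (-m ^ 2 / (2 * s ^ 2)) / ((2 * s ^ 2) ^ ((1:ℝ) / 2) * a ^ ((1:ℝ) / 2)))
        * ((m ^ 2 / ((2 * s ^ 2) ^ 2 * a)) ^ l / l.factorial) := by
  have h2s : (0:ℝ) < 2 * s ^ 2 := by positivity
  have hΓ : (0:ℝ) < Real.Gamma ((l : ℝ) + 1 / 2) := Real.Gamma_pos_of_pos (by positivity)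
  have h1 : (2 * s ^ 2 : ℝ) ^ ((2 * (l : ℝ)) + 1 / 2)
      = ((2 * s ^ 2) ^ 2) ^ l * (2 * s ^ 2) ^ ((1:ℝ) / 2) := by
    rw [Real.rpow_add h2s, show (2 * (l : ℝ)) = ((2 * l : ℕ) : ℝ) by push_cast; ring,
      Real.rpow_natCast, pow_mul]
  have h2 : a ^ ((l : ℝ) + 1 / 2) = a ^ (l : ℕ) * a ^ ((1:ℝ) / 2) := by
    rw [Real.rpow_add ha, Real.rpow_natCast]
  have h3 : (m : ℝ) ^ (2 * l) = (m ^ 2) ^ l := by rw [pow_mul]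
  rw [mixCoeff, h1, h2, h3]
  have hp1 : (0:ℝ) < (2 * s ^ 2) ^ ((1:ℝ)/2) := Real.rpow_pos_of_pos h2s _
  have hp2 : (0:ℝ) < a ^ ((1:ℝ)/2) := Real.rpow_pos_of_pos ha _
  have hp3 : (0:ℝ) < ((2 * s ^ 2) ^ 2) ^ l := by positivity
  have hp4 : (0:ℝ) < a ^ (l:ℕ) := by positivity
  have hp5 : (0:ℝ) < (l.factorial : ℝ) := by exact_mod_cast l.factorial_pos
  rw [div_pow, mul_pow]
  field_simp
  ring

lemma summable_term (m s : ℝ) (hs : 0 < s) {a Z : ℝ} (ha : 0 < a) (hZ : 0 ≤ Z) :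
    Summable (fun l : ℕ =>
      mixCoeff m s l / a ^ ((l : ℝ) + 1 / 2) * lowerIncGamma ((l : ℝ) + 1 / 2) Z) := by
  apply Summable.of_nonneg_of_le (fun l => ?_) (fun l => ?_)
    ((Real.summable_pow_div_factorial (m ^ 2 / ((2 * s ^ 2) ^ 2 * a))).mul_left
      (Real.exp (-m ^ 2 / (2 * s ^ 2)) / ((2 * s ^ 2) ^ ((1:ℝ) / 2) * a ^ ((1:ℝ) / 2))))
  · exact mul_nonneg (div_nonneg (mixCoeff_nonneg m s hs l)
      (Real.rpow_pos_of_pos ha _).le) (lowerIncGamma_nonneg hZ)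
  · rw [← term_bound m s hs ha l]
    apply mul_le_mul_of_nonneg_left (lowerIncGamma_le_Gamma (by positivity) hZ)
    exact div_nonneg (mixCoeff_nonneg m s hs l) (Real.rpow_pos_of_pos ha _).le

/-- Closed-form CDF of the received SNR `γ = γ̂ E + γ̃ H²`, where `E` is exponential
with rate `1` and `H ~ N(m, s²)` are independent. -/
theorem snr_cdf_closed_form {Ω : Type*} [MeasurableSpace Ω]
    (μ : Measure Ω) [IsProbabilityMeasure μ]
    (m s γhat γtil : ℝ) (hs : 0 < s) (hγhat : 0 < γhat) (hγtil : 0 < γtil)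
    (hcond : 2 * s ^ 2 * γtil < γhat)
    (H E : Ω → ℝ) (hH : Measurable H) (hE : Measurable E)
    (hindep : IndepFun E H μ)
    (hHlaw : μ.map H = gaussianReal m (⟨s ^ 2, sq_nonneg s⟩ : ℝ≥0))
    (hElaw : μ.map E = volume.withDensity (exponentialPDF 1)) :
    ∀ t : ℝ, 0 < t →
      (μ {ω | γhat * E ω + γtil * (H ω) ^ 2 ≤ t}).toReal
        = (∑' l : ℕ, mixCoeff m s l / (1 / (2 * s ^ 2)) ^ ((l : ℝ) + 1 / 2) *
              lowerIncGamma ((l : ℝ) + 1 / 2) ((1 / (2 * s ^ 2)) * t / γtil))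
          - Real.exp (-t / γhat) *
            ∑' l : ℕ, mixCoeff m s l / (1 / (2 * s ^ 2) - γtil / γhat) ^ ((l : ℝ) + 1 / 2) *
              lowerIncGamma ((l : ℝ) + 1 / 2) ((1 / (2 * s ^ 2) - γtil / γhat) * t / γtil) := by
  intro t ht
  have hs2 : (0:ℝ) < s ^ 2 := by positivity
  set v : ℝ≥0 := (⟨s ^ 2, sq_nonneg s⟩ : ℝ≥0) with hv
  have hvne : v ≠ 0 := by
    rw [ne_eq, ← NNReal.coe_eq_zero]
    exact hs2.ne'
  set ζ : ℝ := 1 / (2 * s ^ 2) with hζdef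
  set ω : ℝ := 1 / (2 * s ^ 2) - γtil / γhat with hωdef
  have hζ : 0 < ζ := by rw [hζdef]; positivity
  have hω : 0 < ω := by
    rw [hωdef, sub_pos, div_lt_div_iff₀ hγhat (by positivity)]
    linarith
  set X : ℝ := Real.sqrt (t / γtil) with hXdef
  have hX0 : 0 < X := Real.sqrt_pos.mpr (by positivity)
  have hX2 : X ^ 2 = t / γtil := Real.sq_sqrt (by positivity)
  set φ : ℝ → ℝ := fun y => if 0 ≤ (t - γtil * y) / γhat
      then 1 - Real.exp (-((t - γtil * y) / γhat)) else 0 with hφdef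
  have hφmeas : Measurable φ := by
    apply Measurable.ite
    · exact measurableSet_le measurable_const (by fun_prop)
    · fun_prop
    · exact measurable_const
  have hφnonneg : ∀ y, 0 ≤ φ y := by
    intro y
    rw [hφdef]
    dsimp only
    split_ifs with h
    · simp only [sub_nonneg, Real.exp_le_one_iff, neg_nonpos]
      exact h
    · exact le_refl 0
  have hφle : ∀ y, φ y ≤ 1 := by
    intro y
    rw [hφdef]
    dsimp only
    split_ifs with h
    · have := Real.exp_pos (-((t - γtil * y) / γhat))
      linarith
    · norm_num
  -- Step A: reduce to a Gaussian integral
  have hS : MeasurableSet {p : ℝ × ℝ | γhat * p.2 + γtil * p.1 ^ 2 ≤ t} :=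
    measurableSet_le (by fun_prop) measurable_const
  have hmap : μ.map (fun ω => (H ω, E ω)) = (μ.map H).prod (μ.map E) :=
    (indepFun_iff_map_prod_eq_prod_map_map hH.aemeasurable hE.aemeasurable).mp hindep.symm
  have hA : μ {ω | γhat * E ω + γtil * H ω ^ 2 ≤ t}
      = ∫⁻ x, ENNReal.ofReal (φ (x ^ 2)) ∂(gaussianReal m v) := by
    have hpre : {ω | γhat * E ω + γtil * H ω ^ 2 ≤ t}
        = (fun ω => (H ω, E ω)) ⁻¹' {p : ℝ × ℝ | γhat * p.2 + γtil * p.1 ^ 2 ≤ t} := rfl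
    rw [hpre, ← Measure.map_apply (hH.prodMk hE) hS, hmap, hHlaw, Measure.prod_apply hS]
    refine lintegral_congr fun x => ?_
    have hpre2 : (Prod.mk x ⁻¹' {p : ℝ × ℝ | γhat * p.2 + γtil * p.1 ^ 2 ≤ t})
        = Iic ((t - γtil * x ^ 2) / γhat) := by
      ext e
      simp only [mem_preimage, mem_setOf_eq, mem_Iic]
      rw [le_div_iff₀ hγhat]
      constructor <;> intro h <;> linarith
    rw [hpre2, hElaw, withDensity_apply _ measurableSet_Iic,
      lintegral_exponentialPDF_eq_antiDeriv one_pos]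
    rw [hφdef]
    norm_num
  -- Step B: with density
  have hB : μ {ω | γhat * E ω + γtil * H ω ^ 2 ≤ t}
      = ∫⁻ x, gaussianPDF m v x * ENNReal.ofReal (φ (x ^ 2)) := by
    rw [hA, gaussianReal_of_var_ne_zero _ hvne,
      lintegral_withDensity_eq_lintegral_mul _ (measurable_gaussianPDF m v)
        (by fun_prop : Measurable fun x : ℝ => ENNReal.ofReal (φ (x ^ 2)))]
    rfl
  -- Step C: fold the real line onto (0, ∞)
  set F : ℝ → ℝ≥0∞ := fun x => gaussianPDF m v x * ENNReal.ofReal (φ (x ^ 2)) with hFdef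
  have hFmeas : Measurable F := by
    apply Measurable.mul (measurable_gaussianPDF m v)
    fun_prop
  have hsplit : ∫⁻ x, F x = (∫⁻ x in Iio (0:ℝ), F x) + ∫⁻ x in Ioi (0:ℝ), F x := by
    have h1 : ∫⁻ x in Iio (0:ℝ) ∪ Ioi 0, F x
        = (∫⁻ x in Iio (0:ℝ), F x) + ∫⁻ x in Ioi (0:ℝ), F x :=
      lintegral_union measurableSet_Ioi
        ((Iic_disjoint_Ioi le_rfl).mono_left Iio_subset_Iic_self)
    have h2 : ∫⁻ x in ({(0:ℝ)}ᶜ : Set ℝ), F x = ∫⁻ x, F x := by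
      have hae : ({(0:ℝ)}ᶜ : Set ℝ) =ᵐ[(volume : Measure ℝ)] (univ : Set ℝ) := by
        rw [ae_eq_univ, compl_compl]
        exact Real.volume_singleton
      rw [setLIntegral_congr hae, setLIntegral_univ]
    rw [← h2, ← Iio_union_Ioi]
    exact h1
  have hneg : ∫⁻ x in Iio (0:ℝ), F x = ∫⁻ x in Ioi (0:ℝ), F (-x) := by
    have hmp := Measure.measurePreserving_neg (volume : Measure ℝ)
    have := hmp.setLIntegral_comp_preimage_emb
      (Homeomorph.neg ℝ).measurableEmbedding F (Iio 0)
    rw [← this]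
    congr 1
    simp [neg_preimage, neg_Iio]
  -- combine the two halves
  have hFneg : Measurable fun x : ℝ => F (-x) := hFmeas.comp measurable_neg
  have hcomb : μ {ω | γhat * E ω + γtil * H ω ^ 2 ≤ t}
      = ∫⁻ x in Ioi (0:ℝ), (F (-x) + F x) := by
    rw [hB, show lintegral (volume : Measure ℝ) F = ∫⁻ x, F x from rfl, hsplit, hneg]
    exact (lintegral_add_left hFneg F).symm
  -- pointwise series expansion
  have hg1 : ∀ y : ℝ, 0 ≤ gaussianPDFReal m v y := gaussianPDFReal_nonneg m v
  have htermnn : ∀ (x : ℝ) (l : ℕ),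
      0 ≤ 2 * mixCoeff m s l * x ^ (2 * l) * Real.exp (-(x ^ 2 / (2 * s ^ 2))) := by
    intro x l
    have := mixCoeff_nonneg m s hs l
    have hx2 : (0:ℝ) ≤ x ^ (2 * l) := by rw [pow_mul]; positivity
    positivity
  have hpt : ∀ x : ℝ, F (-x) + F x = ∑' l : ℕ,
      ENNReal.ofReal (φ (x ^ 2) *
        (2 * mixCoeff m s l * x ^ (2 * l) * Real.exp (-(x ^ 2 / (2 * s ^ 2))))) := by
    intro x
    have hfold := gauss_fold m s hs x
    calc F (-x) + F x
        = ENNReal.ofReal (gaussianPDFReal m v x + gaussianPDFReal m v (-x))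
            * ENNReal.ofReal (φ (x ^ 2)) := by
          rw [hFdef]
          dsimp only
          rw [neg_sq, ENNReal.ofReal_add (hg1 x) (hg1 (-x)), add_mul, gaussianPDF, gaussianPDF]
          ring
      _ = (∑' l : ℕ, ENNReal.ofReal (2 * mixCoeff m s l * x ^ (2 * l)
            * Real.exp (-(x ^ 2 / (2 * s ^ 2))))) * ENNReal.ofReal (φ (x ^ 2)) := by
          rw [← hfold.tsum_eq, ENNReal.ofReal_tsum_of_nonneg (htermnn x) hfold.summable]
      _ = ∑' l : ℕ, ENNReal.ofReal (φ (x ^ 2) * (2 * mixCoeff m s l * x ^ (2 * l)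
            * Real.exp (-(x ^ 2 / (2 * s ^ 2))))) := by
          rw [← ENNReal.tsum_mul_right]
          exact tsum_congr fun l => by
            rw [← ENNReal.ofReal_mul (htermnn x l)]
            congr 1
            ring
  have hψmeas : ∀ l : ℕ, Measurable fun x : ℝ =>
      φ (x ^ 2) * (2 * mixCoeff m s l * x ^ (2 * l) * Real.exp (-(x ^ 2 / (2 * s ^ 2)))) := by
    intro l
    apply Measurable.mul
    · exact hφmeas.comp (measurable_id.pow_const 2)
    · fun_prop
  have hswap : μ {ω | γhat * E ω + γtil * H ω ^ 2 ≤ t}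
      = ∑' l : ℕ, ∫⁻ x in Ioi (0:ℝ), ENNReal.ofReal (φ (x ^ 2) *
          (2 * mixCoeff m s l * x ^ (2 * l) * Real.exp (-(x ^ 2 / (2 * s ^ 2))))) := by
    rw [hcomb, lintegral_congr hpt]
    exact lintegral_tsum fun l => ((hψmeas l).ennreal_ofReal).aemeasurable
  -- per-term evaluation
  have hXIoi : Ioo (0:ℝ) X ⊆ Ioi 0 := fun x hx => hx.1
  have hexpζ : ∀ x : ℝ, Real.exp (-(x ^ 2 / (2 * s ^ 2))) = Real.exp (-(ζ * x ^ 2)) := by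
    intro x
    rw [hζdef, one_div, inv_mul_eq_div]
  have hKint : ∀ b : ℝ, 0 < b → ∀ l : ℕ, IntegrableOn
      (fun x : ℝ => x ^ (2 * l) * Real.exp (-(b * x ^ 2))) (Ioi 0) := by
    intro b hb l
    have h := integrableOn_rpow_mul_exp_neg_mul_sq hb (s := ((2 * l : ℕ) : ℝ))
      (lt_of_lt_of_le neg_one_lt_zero (Nat.cast_nonneg _))
    simpa only [Real.rpow_natCast, neg_mul] using h
  have hint1 : ∀ l : ℕ, IntegrableOn
      (fun x : ℝ => x ^ (2 * l) * Real.exp (-(ζ * x ^ 2))) (Ioi 0) := hKint ζ hζ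
  have hint2 : ∀ l : ℕ, IntegrableOn
      (fun x : ℝ => x ^ (2 * l) * Real.exp (-(ω * x ^ 2))) (Ioi 0) := hKint ω hω
  have hψint : ∀ l : ℕ, IntegrableOn (fun x : ℝ => φ (x ^ 2) *
      (2 * mixCoeff m s l * x ^ (2 * l) * Real.exp (-(x ^ 2 / (2 * s ^ 2))))) (Ioi 0) := by
    intro l
    apply Integrable.mono' ((hint1 l).const_mul (2 * mixCoeff m s l))
      ((hψmeas l).aestronglyMeasurable).restrict
    filter_upwards with x
    rw [Real.norm_eq_abs, abs_of_nonneg (mul_nonneg (hφnonneg _) (htermnn x l))]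
    calc φ (x ^ 2) * (2 * mixCoeff m s l * x ^ (2 * l) * Real.exp (-(x ^ 2 / (2 * s ^ 2))))
        ≤ 1 * (2 * mixCoeff m s l * x ^ (2 * l) * Real.exp (-(x ^ 2 / (2 * s ^ 2)))) := by
          exact mul_le_mul_of_nonneg_right (hφle _) (htermnn x l)
      _ = 2 * mixCoeff m s l * (x ^ (2 * l) * Real.exp (-(ζ * x ^ 2))) := by
          rw [hexpζ x]; ring
  have hargpos : ∀ x : ℝ, x ∈ Ioo (0:ℝ) X → 0 ≤ (t - γtil * x ^ 2) / γhat := by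
    intro x hx
    apply div_nonneg _ hγhat.le
    have hx2 : x ^ 2 < X ^ 2 := by nlinarith [hx.1, hx.2]
    rw [hX2] at hx2
    have h3 : x ^ 2 * γtil < t := (lt_div_iff₀ hγtil).mp hx2
    linarith
  have hφzero : ∀ x : ℝ, x ∈ Ioi (0:ℝ) \ Ioo 0 X → φ (x ^ 2) = 0 := by
    intro x hx
    have hXle : X ≤ x := by
      rcases hx with ⟨hx1, hx2⟩
      by_contra hcon
      exact hx2 ⟨hx1, lt_of_not_ge hcon⟩
    have harg : (t - γtil * x ^ 2) / γhat ≤ 0 := by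
      apply div_nonpos_of_nonpos_of_nonneg _ hγhat.le
      have hx2 : X ^ 2 ≤ x ^ 2 := pow_le_pow_left₀ hX0.le hXle 2
      rw [hX2] at hx2
      have h3 : t ≤ γtil * x ^ 2 := by
        rw [div_le_iff₀ hγtil] at hx2
        linarith
      linarith
    rw [hφdef]
    dsimp only
    split_ifs with h
    · rw [le_antisymm harg h]
      simp
    · rfl
  have hreal : ∀ l : ℕ, ∫ x in Ioi (0:ℝ), φ (x ^ 2) *
        (2 * mixCoeff m s l * x ^ (2 * l) * Real.exp (-(x ^ 2 / (2 * s ^ 2))))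
      = mixCoeff m s l / ζ ^ ((l:ℝ) + 1/2) * lowerIncGamma ((l:ℝ) + 1/2) (ζ * t / γtil)
          - Real.exp (-t / γhat) *
            (mixCoeff m s l / ω ^ ((l:ℝ) + 1/2) * lowerIncGamma ((l:ℝ) + 1/2) (ω * t / γtil))
      := by
    intro l
    rw [setIntegral_eq_of_subset_of_forall_diff_eq_zero measurableSet_Ioi hXIoi
      (fun x hx => by rw [hφzero x hx, zero_mul])]
    have hptw : EqOn (fun x : ℝ => φ (x ^ 2) *
        (2 * mixCoeff m s l * x ^ (2 * l) * Real.exp (-(x ^ 2 / (2 * s ^ 2)))))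
        (fun x : ℝ => 2 * mixCoeff m s l * (x ^ (2 * l) * Real.exp (-(ζ * x ^ 2)))
          - Real.exp (-t / γhat) *
            (2 * mixCoeff m s l * (x ^ (2 * l) * Real.exp (-(ω * x ^ 2))))) (Ioo 0 X) := by
      intro x hx
      dsimp only
      rw [hexpζ x, hφdef]
      dsimp only
      rw [if_pos (hargpos x hx)]
      have hid : Real.exp (-((t - γtil * x ^ 2) / γhat)) * Real.exp (-(ζ * x ^ 2))
          = Real.exp (-t / γhat) * Real.exp (-(ω * x ^ 2)) := by
        rw [← Real.exp_add, ← Real.exp_add]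
        congr 1
        rw [hζdef, hωdef]
        field_simp
        ring
      linear_combination (-(2 * mixCoeff m s l * x ^ (2 * l))) * hid
    rw [setIntegral_congr_fun measurableSet_Ioo hptw]
    rw [integral_sub (((hint1 l).mono_set hXIoi).const_mul (2 * mixCoeff m s l))
      ((((hint2 l).mono_set hXIoi).const_mul (2 * mixCoeff m s l)).const_mul
        (Real.exp (-t / γhat)))]
    rw [MeasureTheory.integral_const_mul, MeasureTheory.integral_const_mul,
      MeasureTheory.integral_const_mul]
    rw [integral_pow_exp l hζ hX0.le, integral_pow_exp l hω hX0.le, hX2]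
    have hζκ : (0:ℝ) < ζ ^ ((l:ℝ) + 1/2) := Real.rpow_pos_of_pos hζ _
    have hωκ : (0:ℝ) < ω ^ ((l:ℝ) + 1/2) := Real.rpow_pos_of_pos hω _
    rw [show ζ * (t / γtil) = ζ * t / γtil from (mul_div_assoc _ _ _).symm,
      show ω * (t / γtil) = ω * t / γtil from (mul_div_assoc _ _ _).symm]
    field_simp
  have heval : ∀ l : ℕ, ∫⁻ x in Ioi (0:ℝ), ENNReal.ofReal (φ (x ^ 2) *
        (2 * mixCoeff m s l * x ^ (2 * l) * Real.exp (-(x ^ 2 / (2 * s ^ 2)))))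
      = ENNReal.ofReal
          (mixCoeff m s l / ζ ^ ((l:ℝ) + 1/2) * lowerIncGamma ((l:ℝ) + 1/2) (ζ * t / γtil)
            - Real.exp (-t / γhat) *
              (mixCoeff m s l / ω ^ ((l:ℝ) + 1/2) * lowerIncGamma ((l:ℝ) + 1/2) (ω * t / γtil)))
      := by
    intro l
    rw [← ofReal_integral_eq_lintegral_ofReal (hψint l)
      (Filter.Eventually.of_forall fun x => mul_nonneg (hφnonneg _) (htermnn x l)), hreal l]
  have hwnn : ∀ l : ℕ,
      0 ≤ mixCoeff m s l / ζ ^ ((l:ℝ) + 1/2) * lowerIncGamma ((l:ℝ) + 1/2) (ζ * t / γtil)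
          - Real.exp (-t / γhat) *
            (mixCoeff m s l / ω ^ ((l:ℝ) + 1/2) * lowerIncGamma ((l:ℝ) + 1/2) (ω * t / γtil))
      := by
    intro l
    rw [← hreal l]
    exact setIntegral_nonneg measurableSet_Ioi
      (fun x _ => mul_nonneg (hφnonneg _) (htermnn x l))
  have hζZ : 0 ≤ ζ * t / γtil := div_nonneg (mul_nonneg hζ.le ht.le) hγtil.le
  have hωZ : 0 ≤ ω * t / γtil := div_nonneg (mul_nonneg hω.le ht.le) hγtil.le
  have hu : Summable (fun l : ℕ =>
      mixCoeff m s l / ζ ^ ((l:ℝ) + 1/2) * lowerIncGamma ((l:ℝ) + 1/2) (ζ * t / γtil)) :=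
    summable_term m s hs hζ hζZ
  have hv : Summable (fun l : ℕ =>
      mixCoeff m s l / ω ^ ((l:ℝ) + 1/2) * lowerIncGamma ((l:ℝ) + 1/2) (ω * t / γtil)) :=
    summable_term m s hs hω hωZ
  have hve : Summable (fun l : ℕ => Real.exp (-t / γhat) *
      (mixCoeff m s l / ω ^ ((l:ℝ) + 1/2) * lowerIncGamma ((l:ℝ) + 1/2) (ω * t / γtil))) :=
    hv.mul_left _
  have hw : Summable (fun l : ℕ =>
      mixCoeff m s l / ζ ^ ((l:ℝ) + 1/2) * lowerIncGamma ((l:ℝ) + 1/2) (ζ * t / γtil)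
        - Real.exp (-t / γhat) *
          (mixCoeff m s l / ω ^ ((l:ℝ) + 1/2) * lowerIncGamma ((l:ℝ) + 1/2) (ω * t / γtil))) :=
    hu.sub hve
  rw [hswap, tsum_congr heval, ← ENNReal.ofReal_tsum_of_nonneg hwnn hw,
    ENNReal.toReal_ofReal (tsum_nonneg hwnn), Summable.tsum_sub hu hve, tsum_mul_left]
end
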